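/- arXiv:2603.24255 — 7 statements merged into one kernel-verified Lean document; each statement's English description precedes it below -/
import Mathlib

section
/- Let θ be a real-valued random variable taking the values √(2+√3) and −√(2+√3) each with probability (3−√3)/12, and the values √(2−√3) and −√(2−√3) each with probability (3+√3)/12, and set Θ := θ³ − 3θ. Then E[Θ] = 0, E[θ·Θ] = 0, E[θ²·Θ] = 0 and E[Θ²] = 2. -/
/-! `θ` is symmetric, so the odd moments `E[Θ]` and `E[θ²Θ]` vanish. Its four atoms
`±√(2 ± √3)` are the roots of `x⁴ - 4x² + 1 = (x² - 2)² - 3`, and modulo this polynomial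
`Θ² = 2` and `θΘ = θ² - 1`; since `E[θ²] = 1`, the other two claims follow. -/

open MeasureTheory ProbabilityTheory

theorem Finset.sum_pair_neg_pair {M : Type*} [AddCommMonoid M] {a b : ℝ} (hb : 0 < b)
    (hba : b < a) (g : ℝ → M) :
    ∑ x ∈ {a, -a, b, -b}, g x = g a + g (-a) + (g b + g (-b)) := by
  rw [Finset.sum_insert (by grind), Finset.sum_insert (by grind), Finset.sum_pair (by grind),
    add_assoc]

theorem mul_cube_sub_three_mul_of_sq_sub_two_sq {x : ℝ} (hx : (x ^ 2 - 2) ^ 2 = 3) :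
    x * (x ^ 3 - 3 * x) = x ^ 2 - 1 := by
  linear_combination hx

theorem cube_sub_three_mul_sq_of_sq_sub_two_sq {x : ℝ} (hx : (x ^ 2 - 2) ^ 2 = 3) :
    (x ^ 3 - 3 * x) ^ 2 = 2 := by
  linear_combination (x ^ 2 - 2) * hx

namespace MeasureTheory

variable {α E : Type*} [MeasurableSpace α] [MeasurableSingletonClass α]
  [NormedAddCommGroup E] [NormedSpace ℝ E] [CompleteSpace E]

theorem integral_eq_sum_of_measure_compl_eq_zero {μ : Measure α} [IsFiniteMeasure μ]
    {s : Finset α} (hs : μ (↑s)ᶜ = 0) (f : α → E) :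
    ∫ x, f x ∂μ = ∑ x ∈ s, μ.real {x} • f x := by
  rw [← setIntegral_finset s IntegrableOn.finset,
    Measure.restrict_eq_self_of_ae_mem (ae_iff.2 hs)]

theorem integral_comp_eq_sum_of_sum_measure_preimage_singleton_eq_one {Ω : Type*}
    [MeasurableSpace Ω] {μ : Measure Ω} [IsProbabilityMeasure μ] {X : Ω → α} (hX : Measurable X)
    {s : Finset α} (hs : ∑ x ∈ s, μ (X ⁻¹' {x}) = 1) {f : α → E} (hf : StronglyMeasurable f) :
    ∫ ω, f (X ω) ∂μ = ∑ x ∈ s, μ.real (X ⁻¹' {x}) • f x := by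
  have : IsProbabilityMeasure (μ.map X) := Measure.isProbabilityMeasure_map hX.aemeasurable
  have hsupp : μ.map X (↑s)ᶜ = 0 := by
    rw [prob_compl_eq_zero_iff s.measurableSet, Measure.map_apply hX s.measurableSet,
      ← sum_measure_preimage_singleton s fun x _ ↦ hX (measurableSet_singleton x), hs]
  rw [← integral_map hX.aemeasurable hf.aestronglyMeasurable,
    integral_eq_sum_of_measure_compl_eq_zero hsupp]
  simp only [map_measureReal_apply hX (measurableSet_singleton _)]

end MeasureTheory

theorem integral_comp_eq_of_symmetric_four_point {Ω : Type*} [MeasurableSpace Ω] {μ : Measure Ω}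
    [IsProbabilityMeasure μ] {θ : Ω → ℝ} (hθ : Measurable θ) {a b p q : ℝ} (hb : 0 < b)
    (hba : b < a) (hp : 0 ≤ p) (hq : 0 ≤ q) (hpq : 2 * p + 2 * q = 1)
    (hθa : μ (θ ⁻¹' {a}) = ENNReal.ofReal p) (hθa' : μ (θ ⁻¹' {-a}) = ENNReal.ofReal p)
    (hθb : μ (θ ⁻¹' {b}) = ENNReal.ofReal q) (hθb' : μ (θ ⁻¹' {-b}) = ENNReal.ofReal q)
    {f : ℝ → ℝ} (hf : Measurable f) :
    ∫ ω, f (θ ω) ∂μ = p * (f a + f (-a)) + q * (f b + f (-b)) := by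
  have hs : ∑ x ∈ {a, -a, b, -b}, μ (θ ⁻¹' {x}) = 1 := by
    rw [Finset.sum_pair_neg_pair hb hba, hθa, hθa', hθb, hθb', ← ENNReal.ofReal_add hp hp,
      ← ENNReal.ofReal_add hq hq, ← ENNReal.ofReal_add (by positivity) (by positivity),
      ← ENNReal.ofReal_one]
    congr 1
    linarith
  rw [integral_comp_eq_sum_of_sum_measure_preimage_singleton_eq_one hθ hs hf.stronglyMeasurable,
    Finset.sum_pair_neg_pair hb hba]
  simp only [measureReal_def, hθa, hθa', hθb, hθb', ENNReal.toReal_ofReal hp,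
    ENNReal.toReal_ofReal hq, smul_eq_mul]
  ring

theorem stmt1
    (Ω : Type*) [MeasureSpace Ω] [IsProbabilityMeasure (ℙ : Measure Ω)]
    (θ : Ω → ℝ) (hθ : Measurable θ)
    (h1 : ℙ {ω | θ ω = Real.sqrt (2 + Real.sqrt 3)} = ENNReal.ofReal ((3 - Real.sqrt 3) / 12))
    (h2 : ℙ {ω | θ ω = -Real.sqrt (2 + Real.sqrt 3)} = ENNReal.ofReal ((3 - Real.sqrt 3) / 12))
    (h3 : ℙ {ω | θ ω = Real.sqrt (2 - Real.sqrt 3)} = ENNReal.ofReal ((3 + Real.sqrt 3) / 12))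
    (h4 : ℙ {ω | θ ω = -Real.sqrt (2 - Real.sqrt 3)} = ENNReal.ofReal ((3 + Real.sqrt 3) / 12))
    (Θ : Ω → ℝ) (hΘ : Θ = fun ω => (θ ω) ^ 3 - 3 * θ ω) :
    (∫ ω, Θ ω) = 0 ∧ (∫ ω, θ ω * Θ ω) = 0 ∧
    (∫ ω, (θ ω) ^ 2 * Θ ω) = 0 ∧ (∫ ω, (Θ ω) ^ 2) = 2 := by
  have hr : √3 ^ 2 = 3 := Real.sq_sqrt (by norm_num)
  have hr0 : 0 < √3 := by positivity
  have hr2 : √3 < 2 := by nlinarith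
  have ha : √(2 + √3) ^ 2 = 2 + √3 := Real.sq_sqrt (by positivity)
  have hb : √(2 - √3) ^ 2 = 2 - √3 := Real.sq_sqrt (by linarith)
  have hb0 : 0 < √(2 - √3) := Real.sqrt_pos.2 (by linarith)
  have hba : √(2 - √3) < √(2 + √3) := Real.sqrt_lt_sqrt (by linarith) (by linarith)
  have E {f : ℝ → ℝ} (hf : Measurable f) :=
    integral_comp_eq_of_symmetric_four_point hθ hb0 hba (by linarith) (by linarith) (by ring)
      h1 h2 h3 h4 hf
  have hroot_a : (√(2 + √3) ^ 2 - 2) ^ 2 = 3 := by rw [ha]; linear_combination hr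
  have hroot_b : (√(2 - √3) ^ 2 - 2) ^ 2 = 3 := by rw [hb]; linear_combination hr
  have hroot_a' : ((-√(2 + √3)) ^ 2 - 2) ^ 2 = 3 := by rwa [neg_sq]
  have hroot_b' : ((-√(2 - √3)) ^ 2 - 2) ^ 2 = 3 := by rwa [neg_sq]
  subst hΘ
  refine ⟨?_, ?_, ?_, ?_⟩
  · rw [E (f := fun x ↦ x ^ 3 - 3 * x) (by fun_prop)]; ring
  · rw [E (f := fun x ↦ x * (x ^ 3 - 3 * x)) (by fun_prop),
      mul_cube_sub_three_mul_of_sq_sub_two_sq hroot_a,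
      mul_cube_sub_three_mul_of_sq_sub_two_sq hroot_a',
      mul_cube_sub_three_mul_of_sq_sub_two_sq hroot_b,
      mul_cube_sub_three_mul_of_sq_sub_two_sq hroot_b', neg_sq, neg_sq, ha, hb]
    linear_combination (-1 / 3) * hr
  · rw [E (f := fun x ↦ x ^ 2 * (x ^ 3 - 3 * x)) (by fun_prop)]; ring
  · rw [E (f := fun x ↦ (x ^ 3 - 3 * x) ^ 2) (by fun_prop),
      cube_sub_three_mul_sq_of_sq_sub_two_sq hroot_a,
      cube_sub_three_mul_sq_of_sq_sub_two_sq hroot_a',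
      cube_sub_three_mul_sq_of_sq_sub_two_sq hroot_b,
      cube_sub_three_mul_sq_of_sq_sub_two_sq hroot_b']
    ring
end

section
/- Let c ∈ (0, 1/2), let θ be a real-valued random variable taking the values ±√(2+√3) each with probability (3−√3)/12 and ±√(2−√3) each with probability (3+√3)/12, and let η be a random variable independent of θ with P(η = 1) = P(η = −1) = 1/2. Define Θ₀ := θ + √(1/(2c) − 1)·η and Θ₁ := 1 − √(2c/(1−2c))·η·θ. Then E[Θ₀] = 0, E[Θ₀²] = 1/(2c), E[θ·Θ₀] = 1, E[Θ₁] = 1, E[θ·Θ₁] = 0, E[θ²·Θ₁] = 1, and E[Θ₀·θ·Θ₁] = 0. -/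
/-!
Since θ and η take finitely many values and are independent, every expectation E[g(θ, η)] is an
explicit sum over the eight atoms of their joint law. The terms that are odd in η cancel, and
η² = 1; the only nontrivial moment left is E[θ²] = 1, which holds because
(3 - √3)(2 + √3) + (3 + √3)(2 - √3) = 6. Writing A = √(1/(2c) - 1) and S = √(2c/(1 - 2c)), one has
A² = 1/(2c) - 1 and A S = 1, whence E[Θ₀ θ Θ₁] = E[θ²] - A S E[θ² η²] = 0.
-/

open MeasureTheory ProbabilityTheory Function

section DiscreteLaw

variable {Ω α β ι κ E : Type*} [MeasurableSpace Ω] {μ : Measure Ω}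
  [MeasurableSpace α] [MeasurableSingletonClass α] [Fintype ι]
  [NormedAddCommGroup E] [NormedSpace ℝ E] [CompleteSpace E]

theorem ae_exists_eq_of_sum_measureReal_eq_one [IsProbabilityMeasure μ] {X : Ω → α}
    (hX : Measurable X) {v : ι → α} (hv : Injective v)
    (hsum : ∑ i, μ.real (X ⁻¹' {v i}) = 1) : ∀ᵐ ω ∂μ, ∃ i, X ω = v i := by
  have hmeas : ∀ i, MeasurableSet (X ⁻¹' {v i}) := fun i => hX (measurableSet_singleton _)
  have hdisj : Pairwise (Disjoint on fun i => X ⁻¹' {v i}) := fun i j hij =>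
    (Set.disjoint_singleton.2 (hv.ne hij)).preimage X
  have hunion : μ (⋃ i, X ⁻¹' {v i}) = 1 := by
    rw [← ENNReal.toReal_eq_one_iff, ← measureReal_def, measureReal_iUnion_fintype hdisj hmeas,
      hsum]
  filter_upwards [(mem_ae_iff_prob_eq_one (MeasurableSet.iUnion hmeas)).2 hunion] with ω hω
  simpa [eq_comm] using hω

theorem integral_comp_eq_sum_of_ae_exists_eq [IsFiniteMeasure μ] {X : Ω → α}
    (hX : Measurable X) {v : ι → α} (hv : Injective v) (hae : ∀ᵐ ω ∂μ, ∃ i, X ω = v i)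
    (g : α → E) : ∫ ω, g (X ω) ∂μ = ∑ i, μ.real (X ⁻¹' {v i}) • g (v i) := by
  have hmeas : ∀ i, MeasurableSet (X ⁻¹' {v i}) := fun i => hX (measurableSet_singleton _)
  have hsimple : (fun ω => g (X ω)) =ᵐ[μ]
      fun ω => ∑ i, (X ⁻¹' {v i}).indicator (fun _ => g (v i)) ω := by
    filter_upwards [hae] with ω ⟨i, hi⟩
    rw [Finset.sum_eq_single i (fun j _ hji => by simp [hi, hv.ne_iff, hji.symm]) (by simp)]
    simp [hi]
  rw [integral_congr_ae hsimple,
    integral_finsetSum _ fun i _ => (integrable_const _).indicator (hmeas i)]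
  simp_rw [integral_indicator_const _ (hmeas _)]

theorem ProbabilityTheory.IndepFun.integral_comp₂_eq_sum [IsFiniteMeasure μ]
    [MeasurableSpace β] [MeasurableSingletonClass β] [Fintype κ] {X : Ω → α} {Y : Ω → β}
    (hXY : IndepFun X Y μ) (hX : Measurable X) (hY : Measurable Y) {v : ι → α}
    (hv : Injective v) {w : κ → β} (hw : Injective w) (haeX : ∀ᵐ ω ∂μ, ∃ i, X ω = v i)
    (haeY : ∀ᵐ ω ∂μ, ∃ j, Y ω = w j) (g : α → β → E) :
    ∫ ω, g (X ω) (Y ω) ∂μ =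
      ∑ i, ∑ j, (μ.real (X ⁻¹' {v i}) * μ.real (Y ⁻¹' {w j})) • g (v i) (w j) := by
  have hae : ∀ᵐ ω ∂μ, ∃ ij : ι × κ, (X ω, Y ω) = Prod.map v w ij := by
    filter_upwards [haeX, haeY] with ω ⟨i, hi⟩ ⟨j, hj⟩
    exact ⟨(i, j), by simp [hi, hj]⟩
  have hprob : ∀ i j, μ.real ((fun ω => (X ω, Y ω)) ⁻¹' {(v i, w j)}) =
      μ.real (X ⁻¹' {v i}) * μ.real (Y ⁻¹' {w j}) := by
    intro i j
    rw [← Set.singleton_prod_singleton, Set.mk_preimage_prod, measureReal_def,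
      hXY.measure_inter_preimage_eq_mul _ _ (measurableSet_singleton _)
        (measurableSet_singleton _),
      ENNReal.toReal_mul, measureReal_def, measureReal_def]
  rw [integral_comp_eq_sum_of_ae_exists_eq (g := fun p : α × β => g p.1 p.2) (hX.prodMk hY)
    (hv.prodMap hw) hae, Fintype.sum_prod_type]
  simp [hprob]

end DiscreteLaw

theorem sqrt_three_lt_two : √3 < 2 := by
  rw [Real.sqrt_lt' two_pos]
  norm_num

theorem sqrt_two_sub_sqrt_three_pos : 0 < √(2 - √3) :=
  Real.sqrt_pos.2 (sub_pos.2 sqrt_three_lt_two)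

theorem sqrt_two_sub_sqrt_three_lt : √(2 - √3) < √(2 + √3) :=
  Real.sqrt_lt_sqrt (sub_pos.2 sqrt_three_lt_two).le (by linarith [Real.sqrt_pos.2 three_pos])

theorem injective_vec_four {a b : ℝ} (hb : 0 < b) (hba : b < a) :
    Injective ![a, -a, b, -b] := by
  intro i j h
  fin_cases i <;> fin_cases j <;> simp at h ⊢ <;> linarith

theorem fourPoint_second_moment :
    2 * ((3 - √3) / 12) * √(2 + √3) ^ 2 + 2 * ((3 + √3) / 12) * √(2 - √3) ^ 2 = 1 := by
  rw [Real.sq_sqrt (by positivity), Real.sq_sqrt (sub_pos.2 sqrt_three_lt_two).le]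
  linear_combination (-1 / 3 : ℝ) * Real.sq_sqrt (show (0 : ℝ) ≤ 3 by norm_num)

theorem integral_comp₂_fourPoint_rademacher {Ω : Type*} [MeasurableSpace Ω] {μ : Measure Ω}
    [IsProbabilityMeasure μ] {θ η : Ω → ℝ} (hθ : Measurable θ) (hη : Measurable η)
    (hindep : IndepFun θ η μ)
    (h1 : μ {ω | θ ω = √(2 + √3)} = ENNReal.ofReal ((3 - √3) / 12))
    (h2 : μ {ω | θ ω = -√(2 + √3)} = ENNReal.ofReal ((3 - √3) / 12))
    (h3 : μ {ω | θ ω = √(2 - √3)} = ENNReal.ofReal ((3 + √3) / 12))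
    (h4 : μ {ω | θ ω = -√(2 - √3)} = ENNReal.ofReal ((3 + √3) / 12))
    (h5 : μ {ω | η ω = 1} = ENNReal.ofReal (1 / 2))
    (h6 : μ {ω | η ω = -1} = ENNReal.ofReal (1 / 2)) (g : ℝ → ℝ → ℝ) :
    ∫ ω, g (θ ω) (η ω) ∂μ =
      (3 - √3) / 24 * (g √(2 + √3) 1 + g √(2 + √3) (-1) + g (-√(2 + √3)) 1
        + g (-√(2 + √3)) (-1))
      + (3 + √3) / 24 * (g √(2 - √3) 1 + g √(2 - √3) (-1) + g (-√(2 - √3)) 1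
        + g (-√(2 - √3)) (-1)) := by
  have hp : 0 ≤ (3 - √3) / 12 := by linarith [sqrt_three_lt_two]
  have hq : 0 ≤ (3 + √3) / 12 := by positivity
  have hθinj := injective_vec_four sqrt_two_sub_sqrt_three_pos sqrt_two_sub_sqrt_three_lt
  have hηinj : Injective ![(1 : ℝ), -1] := by
    intro i j h
    fin_cases i <;> fin_cases j <;> simp at h ⊢ <;> linarith
  have hθlaw : ∀ i, μ.real (θ ⁻¹' {![√(2 + √3), -√(2 + √3), √(2 - √3), -√(2 - √3)] i}) =
      ![(3 - √3) / 12, (3 - √3) / 12, (3 + √3) / 12, (3 + √3) / 12] i := by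
    intro i
    fin_cases i <;> simp [measureReal_def, Set.preimage, h1, h2, h3, h4, hp, hq]
  have hηlaw : ∀ j, μ.real (η ⁻¹' {![(1 : ℝ), -1] j}) = 1 / 2 := by
    intro j
    fin_cases j <;> simp [measureReal_def, Set.preimage, h5, h6]
  rw [hindep.integral_comp₂_eq_sum hθ hη hθinj hηinj
    (ae_exists_eq_of_sum_measureReal_eq_one hθ hθinj (by simp [Fin.sum_univ_four, hθlaw]; ring))
    (ae_exists_eq_of_sum_measureReal_eq_one hη hηinj (by simp [hηlaw]))]
  simp only [Fin.sum_univ_four, Fin.sum_univ_two, hθlaw, hηlaw, Matrix.cons_val_zero,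
    Matrix.cons_val_one, Matrix.cons_val, Matrix.cons_val_fin_one, smul_eq_mul]
  ring

theorem one_div_two_mul_sub_one_nonneg {c : ℝ} (hc : 0 < c) (hc' : c ≤ 1 / 2) :
    0 ≤ 1 / (2 * c) - 1 := by
  rw [sub_nonneg, le_div_iff₀ (by positivity)]
  linarith

theorem sqrt_one_div_two_mul_sub_one_mul_sqrt {c : ℝ} (hc : 0 < c) (hc' : c < 1 / 2) :
    √(1 / (2 * c) - 1) * √(2 * c / (1 - 2 * c)) = 1 := by
  have h : 1 - 2 * c ≠ 0 := by linarith
  rw [← Real.sqrt_mul (one_div_two_mul_sub_one_nonneg hc hc'.le),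
    show (1 / (2 * c) - 1) * (2 * c / (1 - 2 * c)) = 1 by field_simp, Real.sqrt_one]

theorem stmt3
    (Ω : Type*) [MeasureSpace Ω] [IsProbabilityMeasure (ℙ : Measure Ω)]
    (c : ℝ) (hc : 0 < c) (hc' : c < 1 / 2)
    (θ η : Ω → ℝ) (hθ : Measurable θ) (hη : Measurable η)
    (hindep : IndepFun θ η)
    (h1 : ℙ {ω | θ ω = Real.sqrt (2 + Real.sqrt 3)} = ENNReal.ofReal ((3 - Real.sqrt 3) / 12))
    (h2 : ℙ {ω | θ ω = -Real.sqrt (2 + Real.sqrt 3)} = ENNReal.ofReal ((3 - Real.sqrt 3) / 12))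
    (h3 : ℙ {ω | θ ω = Real.sqrt (2 - Real.sqrt 3)} = ENNReal.ofReal ((3 + Real.sqrt 3) / 12))
    (h4 : ℙ {ω | θ ω = -Real.sqrt (2 - Real.sqrt 3)} = ENNReal.ofReal ((3 + Real.sqrt 3) / 12))
    (h5 : ℙ {ω | η ω = 1} = ENNReal.ofReal (1 / 2))
    (h6 : ℙ {ω | η ω = -1} = ENNReal.ofReal (1 / 2))
    (Θ₀ Θ₁ : Ω → ℝ)
    (hΘ₀ : Θ₀ = fun ω => θ ω + Real.sqrt (1 / (2 * c) - 1) * η ω)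
    (hΘ₁ : Θ₁ = fun ω => 1 - Real.sqrt (2 * c / (1 - 2 * c)) * η ω * θ ω) :
    (∫ ω, Θ₀ ω) = 0 ∧ (∫ ω, (Θ₀ ω) ^ 2) = 1 / (2 * c) ∧ (∫ ω, θ ω * Θ₀ ω) = 1 ∧
    (∫ ω, Θ₁ ω) = 1 ∧ (∫ ω, θ ω * Θ₁ ω) = 0 ∧ (∫ ω, (θ ω) ^ 2 * Θ₁ ω) = 1 ∧
    (∫ ω, Θ₀ ω * θ ω * Θ₁ ω) = 0 := by
  have hlaw := integral_comp₂_fourPoint_rademacher hθ hη hindep h1 h2 h3 h4 h5 h6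
  have hθ2 := fourPoint_second_moment
  have hA := Real.sq_sqrt (one_div_two_mul_sub_one_nonneg hc hc'.le)
  have hAS := sqrt_one_div_two_mul_sub_one_mul_sqrt hc hc'
  set A := √(1 / (2 * c) - 1)
  set S := √(2 * c / (1 - 2 * c))
  subst hΘ₀ hΘ₁
  refine ⟨(hlaw fun x y => x + A * y).trans ?_, (hlaw fun x y => (x + A * y) ^ 2).trans ?_,
    (hlaw fun x y => x * (x + A * y)).trans ?_, (hlaw fun x y => 1 - S * y * x).trans ?_,
    (hlaw fun x y => x * (1 - S * y * x)).trans ?_,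
    (hlaw fun x y => x ^ 2 * (1 - S * y * x)).trans ?_,
    (hlaw fun x y => (x + A * y) * x * (1 - S * y * x)).trans ?_⟩
  · ring
  · linear_combination hθ2 + hA
  · linear_combination hθ2
  · ring
  · ring
  · linear_combination hθ2
  · linear_combination (1 - A * S) * hθ2 - hAS
end

section
/- Let s₁ = 1, s₂ = 2, c = 1/4, α = (1), β = (1/2, 1/2), A⁰ = (1/2) (a 1×1 matrix), B⁰ the 1×2 matrix (1/4, 1/4), A¹ the 2×1 matrix with entries (1/2; 1/2), B¹ the 2×2 matrix with all entries equal to 1/4, and B̂¹ the 2×2 matrix with rows (1/4, (3+2√3)/12) and ((3−2√3)/12, 1/4). Then these coefficients satisfy all of the reduced Stratonovich order conditions (1)–(26) with c = 1/4. -/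
/-!
B̂¹ is the Butcher matrix of the two-stage Gauss–Legendre method, with weights β and nodes
`1/2 ± √3/6`, while B¹, B⁰ and A¹ act as rank-one maps onto constant vectors. Pushing every
matrix-vector product inwards therefore turns each condition into a combination of the moments
`βᵀ nodes^k`, using the simplifying assumptions of the Gauss–Legendre tableau: B̂¹𝟙 = nodes,
B̂¹ nodes = nodes²/2 (C(2)) and βᵀB̂¹ = βᵀ diag(𝟙 - nodes) (D(1)). The moments for `k ≤ 3` are
`1/(k+1)` because two-point Gauss quadrature is exact up to degree three.
-/

open Matrix

namespace GaussLegendre2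

noncomputable def nodes : Fin 2 → ℝ := ![1/2 + √3/6, 1/2 - √3/6]

noncomputable def weights : Fin 2 → ℝ := ![1/2, 1/2]

noncomputable def butcherMatrix : Matrix (Fin 2) (Fin 2) ℝ :=
  !![1/4, (3 + 2 * Real.sqrt 3) / 12; (3 - 2 * Real.sqrt 3) / 12, 1/4]

lemma sq_sqrt_three : √3 ^ 2 = 3 := Real.sq_sqrt zero_le_three

lemma weights_dotProduct_one : weights ⬝ᵥ 1 = 1 := by
  norm_num [weights, dotProduct]

lemma weights_dotProduct_nodes : weights ⬝ᵥ nodes = 1/2 := by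
  rw [weights, nodes, vec2_dotProduct']
  ring

lemma weights_dotProduct_nodes_mul_self : weights ⬝ᵥ (nodes * nodes) = 1/3 := by
  simp only [weights, nodes, vec2_dotProduct, Pi.mul_apply, cons_val_zero, cons_val_one,
    cons_val_fin_one]
  linear_combination (1/36) * sq_sqrt_three

lemma weights_dotProduct_nodes_mul_nodes_mul_self :
    weights ⬝ᵥ (nodes * (nodes * nodes)) = 1/4 := by
  simp only [weights, nodes, vec2_dotProduct, Pi.mul_apply, cons_val_zero, cons_val_one,
    cons_val_fin_one]
  linear_combination (1/24) * sq_sqrt_three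

lemma butcherMatrix_mulVec_one : butcherMatrix *ᵥ 1 = nodes := by
  ext i
  fin_cases i <;>
    simp only [butcherMatrix, nodes, mulVec, vec2_dotProduct, of_apply, Pi.one_apply, Fin.zero_eta,
      Fin.mk_one, cons_val', cons_val_zero, cons_val_one, cons_val_fin_one] <;>
    ring

lemma butcherMatrix_mulVec_nodes : butcherMatrix *ᵥ nodes = (1/2 : ℝ) • (nodes * nodes) := by
  ext i
  fin_cases i <;>
    simp only [butcherMatrix, nodes, mulVec, vec2_dotProduct, of_apply, Pi.smul_apply,
      Pi.mul_apply, smul_eq_mul, Fin.zero_eta, Fin.mk_one, cons_val', cons_val_zero, cons_val_one,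
      cons_val_fin_one] <;>
    linear_combination (-1/24) * sq_sqrt_three

lemma weights_vecMul_butcherMatrix : weights ᵥ* butcherMatrix = weights * (1 - nodes) := by
  ext i
  fin_cases i <;>
    simp only [weights, butcherMatrix, nodes, vecMul, vec2_dotProduct, of_apply, Pi.sub_apply,
      Pi.one_apply, Pi.mul_apply, Fin.zero_eta, Fin.mk_one, cons_val', cons_val_zero, cons_val_one,
      cons_val_fin_one] <;>
    ring

lemma weights_dotProduct_butcherMatrix_mulVec (v : Fin 2 → ℝ) :
    weights ⬝ᵥ (butcherMatrix *ᵥ v) = weights ⬝ᵥ v - weights ⬝ᵥ (nodes * v) := by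
  simp only [dotProduct_mulVec, weights_vecMul_butcherMatrix, vec2_dotProduct, Pi.mul_apply,
    Pi.sub_apply, Pi.one_apply]
  ring

end GaussLegendre2

open GaussLegendre2

lemma quarters_mulVec (v : Fin 2 → ℝ) :
    !![1/4, 1/4; 1/4, 1/4] *ᵥ v = (weights ⬝ᵥ v / 2) • (1 : Fin 2 → ℝ) := by
  ext i
  fin_cases i <;>
    simp only [weights, mulVec, vec2_dotProduct, of_apply, Pi.smul_apply, Pi.one_apply,
      smul_eq_mul, Fin.zero_eta, Fin.mk_one, cons_val', cons_val_zero, cons_val_one,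
      cons_val_fin_one] <;>
    ring

lemma quartersRow_mulVec (v : Fin 2 → ℝ) : !![1/4, 1/4] *ᵥ v = ![weights ⬝ᵥ v / 2] := by
  ext i
  fin_cases i
  simp only [weights, mulVec, vec2_dotProduct, of_apply, Fin.zero_eta, cons_val', cons_val_zero,
    cons_val_one, cons_val_fin_one]
  ring

lemma halvesColumn_mulVec_one :
    !![1/2; 1/2] *ᵥ (1 : Fin 1 → ℝ) = (1/2 : ℝ) • (1 : Fin 2 → ℝ) := by
  ext i
  fin_cases i <;> simp [mulVec, dotProduct]

theorem stmt9
    (c : ℝ) (α : Fin 1 → ℝ) (β : Fin 2 → ℝ)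
    (A0 : Matrix (Fin 1) (Fin 1) ℝ) (B0 : Matrix (Fin 1) (Fin 2) ℝ)
    (A1 : Matrix (Fin 2) (Fin 1) ℝ) (B1 : Matrix (Fin 2) (Fin 2) ℝ)
    (Bh : Matrix (Fin 2) (Fin 2) ℝ)
    (hc : c = 1 / 4)
    (hα : α = ![1]) (hβ : β = ![1/2, 1/2])
    (hA0 : A0 = !![1/2]) (hB0 : B0 = !![1/4, 1/4])
    (hA1 : A1 = !![1/2; 1/2]) (hB1 : B1 = !![1/4, 1/4; 1/4, 1/4])
    (hBh : Bh = !![1/4, (3 + 2 * Real.sqrt 3) / 12; (3 - 2 * Real.sqrt 3) / 12, 1/4]) :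
    α ⬝ᵥ (1 : Fin 1 → ℝ) = 1 ∧
    β ⬝ᵥ (1 : Fin 2 → ℝ) = 1 ∧
    β ⬝ᵥ (Bh *ᵥ 1) = 1/2 ∧
    α ⬝ᵥ (A0 *ᵥ 1) = 1/2 ∧
    α ⬝ᵥ (B0 *ᵥ 1) = 1/2 ∧
    α ⬝ᵥ ((B0 *ᵥ 1) * (B0 *ᵥ 1)) = c ∧
    α ⬝ᵥ (B0 *ᵥ (Bh *ᵥ 1)) = 1/4 ∧
    β ⬝ᵥ (A1 *ᵥ 1) = 1/2 ∧
    β ⬝ᵥ ((Bh *ᵥ 1) * (A1 *ᵥ 1)) = 1/4 ∧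
    β ⬝ᵥ (Bh *ᵥ (A1 *ᵥ 1)) = 1/4 ∧
    β ⬝ᵥ (B1 *ᵥ 1) = 1/2 ∧
    β ⬝ᵥ ((B1 *ᵥ 1) * (B1 *ᵥ 1)) = 1/4 ∧
    β ⬝ᵥ (Bh *ᵥ (B1 *ᵥ (Bh *ᵥ 1))) = 1/8 ∧
    β ⬝ᵥ ((Bh *ᵥ 1) * (B1 *ᵥ (Bh *ᵥ 1))) = 1/8 ∧
    β ⬝ᵥ ((Bh *ᵥ 1) * ((B1 *ᵥ 1) * (B1 *ᵥ 1))) = 1/8 ∧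
    β ⬝ᵥ ((B1 *ᵥ 1) * (Bh *ᵥ (B1 *ᵥ 1))) = 1/8 ∧
    β ⬝ᵥ (Bh *ᵥ ((B1 *ᵥ 1) * (B1 *ᵥ 1))) = 1/8 ∧
    β ⬝ᵥ ((B1 *ᵥ 1) * (Bh *ᵥ 1)) = 1/4 ∧
    β ⬝ᵥ (Bh *ᵥ (B1 *ᵥ 1)) = 1/4 ∧
    β ⬝ᵥ (B1 *ᵥ (Bh *ᵥ 1)) = 1/4 ∧
    β ⬝ᵥ ((Bh *ᵥ 1) * (Bh *ᵥ (Bh *ᵥ 1))) = 1/8 ∧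
    β ⬝ᵥ (Bh *ᵥ ((Bh *ᵥ 1) * (Bh *ᵥ 1))) = 1/12 ∧
    β ⬝ᵥ (Bh *ᵥ (Bh *ᵥ (Bh *ᵥ 1))) = 1/24 ∧
    β ⬝ᵥ ((Bh *ᵥ 1) * (Bh *ᵥ 1) * (Bh *ᵥ 1)) = 1/4 ∧
    β ⬝ᵥ ((Bh *ᵥ 1) * (Bh *ᵥ 1)) = 1/3 ∧
    β ⬝ᵥ (Bh *ᵥ (Bh *ᵥ 1)) = 1/6 := by
  obtain rfl : β = weights := hβ
  obtain rfl : Bh = butcherMatrix := hBh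
  subst hc hα hA0 hB0 hA1 hB1
  simp only [butcherMatrix_mulVec_one, butcherMatrix_mulVec_nodes, quarters_mulVec,
    quartersRow_mulVec, halvesColumn_mulVec_one, weights_dotProduct_butcherMatrix_mulVec,
    mulVec_smul, smul_mul_assoc, mul_smul_comm, mul_one, one_mul, mul_assoc, dotProduct_smul,
    smul_eq_mul, weights_dotProduct_one, weights_dotProduct_nodes,
    weights_dotProduct_nodes_mul_self, weights_dotProduct_nodes_mul_nodes_mul_self]
  norm_num [mulVec, dotProduct]
end

section
/- Let s₁ = 2, s₂ = 3, c = 1/2, α = (1/2, 1/2), β = (0, 1/2, 1/2), A⁰ the 2×2 matrix with rows (0,0), (1,0), B⁰ the 2×3 matrix with rows (0,0,0), (1,0,0), A¹ the 3×2 matrix with rows (0,0), (1/2,0), (1/2,0), B¹ the 3×3 matrix with rows (0,0,0), (1/2,0,0), (1/2,0,0), and B̂¹ the 3×3 matrix with rows (1/2,0,0), ((3−2√3)/6, √3/6, 0), ((−3+2√3)/6, 1/2, (3−√3)/6). Then these coefficients satisfy all of the reduced Stratonovich order conditions (1)–(26) as well as the additional condition (27) for c = 1/2. -/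
open Matrix

set_option maxHeartbeats 2000000 in
theorem stmt14
    (c : ℝ) (α : Fin 2 → ℝ) (β : Fin 3 → ℝ)
    (A0 : Matrix (Fin 2) (Fin 2) ℝ) (B0 : Matrix (Fin 2) (Fin 3) ℝ)
    (A1 : Matrix (Fin 3) (Fin 2) ℝ) (B1 : Matrix (Fin 3) (Fin 3) ℝ)
    (Bh : Matrix (Fin 3) (Fin 3) ℝ)
    (hc : c = 1 / 2)
    (hα : α = ![1/2, 1/2]) (hβ : β = ![0, 1/2, 1/2])
    (hA0 : A0 = !![0, 0; 1, 0]) (hB0 : B0 = !![0, 0, 0; 1, 0, 0])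
    (hA1 : A1 = !![0, 0; 1/2, 0; 1/2, 0]) (hB1 : B1 = !![0, 0, 0; 1/2, 0, 0; 1/2, 0, 0])
    (hBh : Bh = !![1/2, 0, 0; (3 - 2 * Real.sqrt 3) / 6, Real.sqrt 3 / 6, 0; (-3 + 2 * Real.sqrt 3) / 6, 1/2, (3 - Real.sqrt 3) / 6]) :
    α ⬝ᵥ (1 : Fin 2 → ℝ) = 1 ∧
    β ⬝ᵥ (1 : Fin 3 → ℝ) = 1 ∧
    β ⬝ᵥ (Bh *ᵥ 1) = 1/2 ∧
    α ⬝ᵥ (A0 *ᵥ 1) = 1/2 ∧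
    α ⬝ᵥ (B0 *ᵥ 1) = 1/2 ∧
    α ⬝ᵥ ((B0 *ᵥ 1) * (B0 *ᵥ 1)) = c ∧
    α ⬝ᵥ (B0 *ᵥ (Bh *ᵥ 1)) = 1/4 ∧
    β ⬝ᵥ (A1 *ᵥ 1) = 1/2 ∧
    β ⬝ᵥ ((Bh *ᵥ 1) * (A1 *ᵥ 1)) = 1/4 ∧
    β ⬝ᵥ (Bh *ᵥ (A1 *ᵥ 1)) = 1/4 ∧
    β ⬝ᵥ (B1 *ᵥ 1) = 1/2 ∧
    β ⬝ᵥ ((B1 *ᵥ 1) * (B1 *ᵥ 1)) = 1/4 ∧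
    β ⬝ᵥ (Bh *ᵥ (B1 *ᵥ (Bh *ᵥ 1))) = 1/8 ∧
    β ⬝ᵥ ((Bh *ᵥ 1) * (B1 *ᵥ (Bh *ᵥ 1))) = 1/8 ∧
    β ⬝ᵥ ((Bh *ᵥ 1) * ((B1 *ᵥ 1) * (B1 *ᵥ 1))) = 1/8 ∧
    β ⬝ᵥ ((B1 *ᵥ 1) * (Bh *ᵥ (B1 *ᵥ 1))) = 1/8 ∧
    β ⬝ᵥ (Bh *ᵥ ((B1 *ᵥ 1) * (B1 *ᵥ 1))) = 1/8 ∧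
    β ⬝ᵥ ((B1 *ᵥ 1) * (Bh *ᵥ 1)) = 1/4 ∧
    β ⬝ᵥ (Bh *ᵥ (B1 *ᵥ 1)) = 1/4 ∧
    β ⬝ᵥ (B1 *ᵥ (Bh *ᵥ 1)) = 1/4 ∧
    β ⬝ᵥ ((Bh *ᵥ 1) * (Bh *ᵥ (Bh *ᵥ 1))) = 1/8 ∧
    β ⬝ᵥ (Bh *ᵥ ((Bh *ᵥ 1) * (Bh *ᵥ 1))) = 1/12 ∧
    β ⬝ᵥ (Bh *ᵥ (Bh *ᵥ (Bh *ᵥ 1))) = 1/24 ∧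
    β ⬝ᵥ ((Bh *ᵥ 1) * (Bh *ᵥ 1) * (Bh *ᵥ 1)) = 1/4 ∧
    β ⬝ᵥ ((Bh *ᵥ 1) * (Bh *ᵥ 1)) = 1/3 ∧
    β ⬝ᵥ (Bh *ᵥ (Bh *ᵥ 1)) = 1/6 ∧
    β ⬝ᵥ (A1 *ᵥ (B0 *ᵥ 1)) = 0 := by
  subst hc hα hβ hA0 hB0 hA1 hB1 hBh
  have h3 : Real.sqrt 3 * Real.sqrt 3 = 3 := Real.mul_self_sqrt (by norm_num)
  refine ⟨?_, ?_, ?_, ?_, ?_, ?_, ?_, ?_, ?_, ?_, ?_, ?_, ?_, ?_, ?_, ?_, ?_, ?_, ?_, ?_, ?_, ?_, ?_, ?_, ?_, ?_, ?_⟩ <;>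
    · simp [Matrix.mulVec, dotProduct, Fin.sum_univ_succ, Pi.mul_apply]
      try nlinarith [h3]
end

section
/- Let s₁ = 1, s₂ = 3, c = 1/4, α = (1), β = (0, 1/2, 1/2), A⁰ = (1/2) (a 1×1 matrix), B⁰ the 1×3 matrix (1/2, 0, 0), A¹ the 3×1 matrix with entries (0; 1/2; 1/2), B¹ the 3×3 matrix with rows (0,0,0), (1/2,0,0), (1/2,0,0), and B̂¹ the 3×3 matrix with rows (1/2,0,0), ((3−2√3)/6, √3/6, 0), ((−3+2√3)/6, 1/2, (3−√3)/6). Then these coefficients satisfy all of the reduced Stratonovich order conditions (1)–(26) with c = 1/4. -/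
/-!
The abscissae `B̂¹𝟙 = (1/2, (3 - √3)/6, (3 + √3)/6)` contain the two Gauss–Legendre nodes of `[0, 1]`,
and `β = (0, 1/2, 1/2)` puts the Gauss weights on them, so `β` integrates cubic polynomials in the
abscissae exactly. On the two stages that carry weight, `B̂¹` moreover satisfies the simplifying
assumptions `βᵀB̂¹ = βᵀ diag(𝟙 - B̂¹𝟙)` and `(B̂¹B̂¹𝟙)ᵢ = (B̂¹𝟙)ᵢ² / 2`, while `B¹𝟙` and `A¹𝟙` equal `1/2`
there. Together these turn every order condition into the Gauss quadrature of a cubic.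
-/

open Matrix

noncomputable section

def gaussNode₁ : ℝ := (3 - √3) / 6

def gaussNode₂ : ℝ := (3 + √3) / 6

theorem gaussNode_moment {k : ℕ} (hk : k ≤ 3) :
    (gaussNode₁ ^ k + gaussNode₂ ^ k) / 2 = 1 / (k + 1) := by
  interval_cases k <;> simp only [gaussNode₁, gaussNode₂] <;> ring_nf <;> norm_num

def bHat : Matrix (Fin 3) (Fin 3) ℝ :=
  !![1/2, 0, 0; (3 - 2 * √3) / 6, √3 / 6, 0; (-3 + 2 * √3) / 6, 1/2, (3 - √3) / 6]

theorem bHat_mulVec_one : bHat *ᵥ 1 = ![1/2, gaussNode₁, gaussNode₂] := by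
  ext i
  fin_cases i <;> simp only [bHat, gaussNode₁, gaussNode₂, mulVec, dotProduct, Fin.sum_univ_three,
    Fin.zero_eta, Fin.mk_one, Fin.reduceFinMk, of_apply, cons_val', cons_val_zero, cons_val_one,
    cons_val, cons_val_fin_one, Pi.one_apply] <;> ring

theorem bHat_mulVec_abscissae :
    bHat *ᵥ ![1/2, gaussNode₁, gaussNode₂] = ![1/4, gaussNode₁ ^ 2 / 2, gaussNode₂ ^ 2 / 2] := by
  have h3 : √3 ^ 2 = 3 := Real.sq_sqrt (by norm_num)
  ext i
  fin_cases i <;> simp only [bHat, gaussNode₁, gaussNode₂, mulVec, dotProduct, Fin.sum_univ_three,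
    Fin.zero_eta, Fin.mk_one, Fin.reduceFinMk, of_apply, cons_val', cons_val_zero, cons_val_one,
    cons_val, cons_val_fin_one] <;> linarith

theorem weights_dotProduct_bHat_mulVec (v : Fin 3 → ℝ) :
    ![0, 1/2, 1/2] ⬝ᵥ (bHat *ᵥ v) = ((1 - gaussNode₁) * v 1 + (1 - gaussNode₂) * v 2) / 2 := by
  simp only [bHat, gaussNode₁, gaussNode₂, mulVec, dotProduct, Fin.sum_univ_three,
    of_apply, cons_val', cons_val_zero, cons_val_one, cons_val, cons_val_fin_one]
  ring

end

theorem stmt15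
    (c : ℝ) (α : Fin 1 → ℝ) (β : Fin 3 → ℝ)
    (A0 : Matrix (Fin 1) (Fin 1) ℝ) (B0 : Matrix (Fin 1) (Fin 3) ℝ)
    (A1 : Matrix (Fin 3) (Fin 1) ℝ) (B1 : Matrix (Fin 3) (Fin 3) ℝ)
    (Bh : Matrix (Fin 3) (Fin 3) ℝ)
    (hc : c = 1 / 4)
    (hα : α = ![1]) (hβ : β = ![0, 1/2, 1/2])
    (hA0 : A0 = !![1/2]) (hB0 : B0 = !![1/2, 0, 0])
    (hA1 : A1 = !![0; 1/2; 1/2]) (hB1 : B1 = !![0, 0, 0; 1/2, 0, 0; 1/2, 0, 0])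
    (hBh : Bh = !![1/2, 0, 0; (3 - 2 * Real.sqrt 3) / 6, Real.sqrt 3 / 6, 0; (-3 + 2 * Real.sqrt 3) / 6, 1/2, (3 - Real.sqrt 3) / 6]) :
    α ⬝ᵥ (1 : Fin 1 → ℝ) = 1 ∧
    β ⬝ᵥ (1 : Fin 3 → ℝ) = 1 ∧
    β ⬝ᵥ (Bh *ᵥ 1) = 1/2 ∧
    α ⬝ᵥ (A0 *ᵥ 1) = 1/2 ∧
    α ⬝ᵥ (B0 *ᵥ 1) = 1/2 ∧
    α ⬝ᵥ ((B0 *ᵥ 1) * (B0 *ᵥ 1)) = c ∧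
    α ⬝ᵥ (B0 *ᵥ (Bh *ᵥ 1)) = 1/4 ∧
    β ⬝ᵥ (A1 *ᵥ 1) = 1/2 ∧
    β ⬝ᵥ ((Bh *ᵥ 1) * (A1 *ᵥ 1)) = 1/4 ∧
    β ⬝ᵥ (Bh *ᵥ (A1 *ᵥ 1)) = 1/4 ∧
    β ⬝ᵥ (B1 *ᵥ 1) = 1/2 ∧
    β ⬝ᵥ ((B1 *ᵥ 1) * (B1 *ᵥ 1)) = 1/4 ∧
    β ⬝ᵥ (Bh *ᵥ (B1 *ᵥ (Bh *ᵥ 1))) = 1/8 ∧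
    β ⬝ᵥ ((Bh *ᵥ 1) * (B1 *ᵥ (Bh *ᵥ 1))) = 1/8 ∧
    β ⬝ᵥ ((Bh *ᵥ 1) * ((B1 *ᵥ 1) * (B1 *ᵥ 1))) = 1/8 ∧
    β ⬝ᵥ ((B1 *ᵥ 1) * (Bh *ᵥ (B1 *ᵥ 1))) = 1/8 ∧
    β ⬝ᵥ (Bh *ᵥ ((B1 *ᵥ 1) * (B1 *ᵥ 1))) = 1/8 ∧
    β ⬝ᵥ ((B1 *ᵥ 1) * (Bh *ᵥ 1)) = 1/4 ∧
    β ⬝ᵥ (Bh *ᵥ (B1 *ᵥ 1)) = 1/4 ∧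
    β ⬝ᵥ (B1 *ᵥ (Bh *ᵥ 1)) = 1/4 ∧
    β ⬝ᵥ ((Bh *ᵥ 1) * (Bh *ᵥ (Bh *ᵥ 1))) = 1/8 ∧
    β ⬝ᵥ (Bh *ᵥ ((Bh *ᵥ 1) * (Bh *ᵥ 1))) = 1/12 ∧
    β ⬝ᵥ (Bh *ᵥ (Bh *ᵥ (Bh *ᵥ 1))) = 1/24 ∧
    β ⬝ᵥ ((Bh *ᵥ 1) * (Bh *ᵥ 1) * (Bh *ᵥ 1)) = 1/4 ∧
    β ⬝ᵥ ((Bh *ᵥ 1) * (Bh *ᵥ 1)) = 1/3 ∧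
    β ⬝ᵥ (Bh *ᵥ (Bh *ᵥ 1)) = 1/6 := by
  subst hc hα hβ hA0 hB0 hA1 hB1
  obtain rfl : Bh = bHat := hBh
  have hA1 : !![(0 : ℝ); 1/2; 1/2] *ᵥ 1 = ![0, 1/2, 1/2] := by
    ext i; fin_cases i <;> simp [mulVec, dotProduct]
  have hB1 (v : Fin 3 → ℝ) : !![0, 0, 0; 1/2, 0, 0; 1/2, 0, 0] *ᵥ v = ![0, v 0 / 2, v 0 / 2] := by
    ext i
    fin_cases i <;> simp only [mulVec, dotProduct, Fin.sum_univ_three, Fin.zero_eta, Fin.mk_one,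
      Fin.reduceFinMk, of_apply, cons_val', cons_val_zero, cons_val_one, cons_val,
      cons_val_fin_one] <;> ring
  -- condition (16) is half of this, because `B¹𝟙 = 1/2` on the stages that carry weight
  have h19 := weights_dotProduct_bHat_mulVec ![0, 1/2, 1/2]
  have m1 := gaussNode_moment (k := 1) (by norm_num)
  have m2 := gaussNode_moment (k := 2) (by norm_num)
  have m3 := gaussNode_moment (k := 3) (by norm_num)
  norm_num at m1 m2 m3
  simp only [bHat_mulVec_one, hA1, hB1, bHat_mulVec_abscissae, weights_dotProduct_bHat_mulVec]
  simp only [dotProduct, mulVec, Fin.sum_univ_three, Finset.univ_unique, Fin.default_eq_zero,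
    Finset.sum_const, Finset.card_singleton, one_smul, cons_mulVec, empty_mulVec, of_apply,
    cons_val', cons_val_zero, cons_val_one, cons_val, cons_val_fin_one, Pi.one_apply, Pi.mul_apply,
    mul_zero, zero_mul, mul_one, one_mul, zero_add, add_zero, true_and] at h19 ⊢
  and_intros <;> linarith
end

section
/- There do not exist a natural number s ≥ 1, a vector β ∈ ℝ^s, a matrix B ∈ ℝ^{s×s}, and real numbers a, b, e such that, writing 𝟙 ∈ ℝ^s for the all-ones vector, all four of the following equations hold simultaneously: (βᵀ𝟙)²·a = 1; (βᵀ𝟙)·(βᵀB B𝟙)·b = 0; (βᵀB𝟙)²·b = 1/2; and (βᵀB B𝟙)²·e = 1/6. -/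
open Matrix

theorem stmt16 :
    ¬ ∃ (s : ℕ) (_ : 1 ≤ s) (β : Fin s → ℝ) (B : Matrix (Fin s) (Fin s) ℝ) (a b e : ℝ),
      (β ⬝ᵥ (1 : Fin s → ℝ)) ^ 2 * a = 1 ∧
      (β ⬝ᵥ (1 : Fin s → ℝ)) * (β ⬝ᵥ (B *ᵥ (B *ᵥ 1))) * b = 0 ∧
      (β ⬝ᵥ (B *ᵥ 1)) ^ 2 * b = 1/2 ∧
      (β ⬝ᵥ (B *ᵥ (B *ᵥ 1))) ^ 2 * e = 1/6 := by
  rintro ⟨s, -, β, B, a, b, e, h1, h2, h3, h4⟩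
  have hβ1 : β ⬝ᵥ 1 ≠ 0 := by
    intro h; rw [h] at h1; norm_num at h1
  have hb : b ≠ 0 := by
    rintro rfl; norm_num at h3
  have hβBB1 : β ⬝ᵥ (B *ᵥ (B *ᵥ 1)) ≠ 0 := by
    intro h; rw [h] at h4; norm_num at h4
  exact mul_ne_zero (mul_ne_zero hβ1 hβBB1) hb h2
end

section
/- There do not exist real numbers β and B̂ such that β = 1, β·B̂ = 1/2 and β·B̂² = 1/3. Consequently, the reduced Stratonovich order conditions (2), (3) and (25) cannot all be satisfied by coefficients with a single stochastic stage s₂ = 1. -/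
/-! A one-stage rule that integrates `1` and `x` exactly over `[0, 1]` is the midpoint rule
(`β = 1`, `B̂ = 1/2`), and the midpoint rule integrates `x²` to `1/4`, not `1/3`. With a single
stochastic stage the vector conditions (2), (3), (25) are exactly these scalar conditions. -/

open Matrix

theorem midpoint_rule_sq {β b : ℝ} (hβ : β = 1) (hb : β * b = 1 / 2) : β * b ^ 2 = 1 / 4 := by
  subst hβ
  rw [one_mul] at hb
  rw [one_mul, hb]
  norm_num

theorem dotProduct_fin_one {R : Type*} [Mul R] [AddCommMonoid R] (v w : Fin 1 → R) :
    v ⬝ᵥ w = v 0 * w 0 :=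
  Fin.sum_univ_one _

theorem mulVec_one_fin_one {R m : Type*} [NonAssocSemiring R] (A : Matrix m (Fin 1) R) (i : m) :
    (A *ᵥ 1) i = A i 0 := by
  rw [mulVec, dotProduct_fin_one, Pi.one_apply, mul_one]

theorem stmt19 :
    (¬ ∃ (β Bh : ℝ), β = 1 ∧ β * Bh = 1/2 ∧ β * Bh ^ 2 = 1/3) ∧
    (¬ ∃ (β : Fin 1 → ℝ) (Bh : Matrix (Fin 1) (Fin 1) ℝ),
      β ⬝ᵥ (1 : Fin 1 → ℝ) = 1 ∧
      β ⬝ᵥ (Bh *ᵥ 1) = 1/2 ∧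
      β ⬝ᵥ ((Bh *ᵥ 1) * (Bh *ᵥ 1)) = 1/3) := by
  have scalar : ¬ ∃ (β Bh : ℝ), β = 1 ∧ β * Bh = 1/2 ∧ β * Bh ^ 2 = 1/3 := by
    rintro ⟨β, b, h₀, h₁, h₂⟩
    rw [midpoint_rule_sq h₀ h₁] at h₂
    norm_num at h₂
  refine ⟨scalar, ?_⟩
  rintro ⟨β, Bh, h₀, h₁, h₂⟩
  simp only [dotProduct_fin_one, mulVec_one_fin_one, Pi.mul_apply, Pi.one_apply, mul_one] at h₀ h₁ h₂
  exact scalar ⟨β 0, Bh 0 0, h₀, h₁, by rwa [sq]⟩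
end
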